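/- If for every bipartition of the vertices of a connected graph G into two sets each inducing a connected subgraph the cut has size at least k, then the bond carving-width of G is at least k; consequently, for the n×n toroidal grid the carving-width is at least n. -/

import Mathlib

open SimpleGraph Set

/-- The set of edges of `G` crossing the bipartition `(U, Uᶜ)`. -/
def crossCut {V : Type*} (G : SimpleGraph V) (U : Set V) : Set (Sym2 V) :=
  {e | e ∈ G.edgeSet ∧ ∃ u w, u ∈ U ∧ w ∉ U ∧ e = s(u, w)}

/-- A carving-decomposition of `G`: a binary tree (all degrees 1 or 3) whose
leaves are in bijection with the vertices of `G`. -/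
structure CarvingDecomp {V : Type*} (G : SimpleGraph V) where
  N : Type
  finN : Finite N
  T : SimpleGraph N
  isTree : T.IsTree
  binary : ∀ n : N, (T.neighborSet n).ncard = 1 ∨ (T.neighborSet n).ncard = 3
  φ : V → N
  φinj : Function.Injective φ
  φleaf : ∀ v, (T.neighborSet (φ v)).ncard = 1
  leafφ : ∀ n, (T.neighborSet n).ncard = 1 → ∃ v, φ v = n

namespace CarvingDecomp

variable {V : Type*} {G : SimpleGraph V} (cd : CarvingDecomp G)

/-- The side of the vertex bipartition induced by removing the tree edge `s(a,b)`
from the carving tree, namely those vertices whose leaves remain connected to `a`. -/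
def side (a b : cd.N) : Set V :=
  {v | (cd.T.deleteEdges {s(a, b)}).Reachable (cd.φ v) a}

/-- The middle set of the tree edge `s(a,b)`: the edges of `G` crossing the
induced vertex bipartition. -/
def mid (a b : cd.N) : Set (Sym2 V) :=
  crossCut G (cd.side a b)

/-- The carving-decomposition has width at most `k`. -/
def widthLE (k : ℕ) : Prop :=
  ∀ a b : cd.N, cd.T.Adj a b → (cd.mid a b).ncard ≤ k

end CarvingDecomp

def HasCarvingWidthLE {V : Type*} (G : SimpleGraph V) (k : ℕ) : Prop :=
  ∃ cd : CarvingDecomp G, cd.widthLE k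

noncomputable def carvingWidth {V : Type*} (G : SimpleGraph V) : ℕ :=
  sInf {k | HasCarvingWidthLE G k}

/-- A tree-decomposition of `G`. -/
structure TreeDecomp {V : Type*} (G : SimpleGraph V) where
  ι : Type
  T : SimpleGraph ι
  isTree : T.IsTree
  bag : ι → Set V
  bag_finite : ∀ i, (bag i).Finite
  covers_vertex : ∀ v, ∃ i, v ∈ bag i
  covers_edge : ∀ ⦃u v⦄, G.Adj u v → ∃ i, u ∈ bag i ∧ v ∈ bag i
  subtree : ∀ v, (T.induce {i | v ∈ bag i}).Connected

/-- The tree-decomposition has width at most `k` (all bags of size at most `k+1`). -/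
def TreeDecomp.widthLE {V : Type*} {G : SimpleGraph V} (td : TreeDecomp G) (k : ℕ) : Prop :=
  ∀ i, (td.bag i).ncard ≤ k + 1

def HasTreewidthLE {V : Type*} (G : SimpleGraph V) (k : ℕ) : Prop :=
  ∃ td : TreeDecomp G, td.widthLE k

noncomputable def treewidth {V : Type*} (G : SimpleGraph V) : ℕ :=
  sInf {k | HasTreewidthLE G k}

/-- A carving-decomposition is a *bond* carving-decomposition if both sides of
the bipartition induced by every tree edge induce connected subgraphs. -/
def CarvingDecomp.IsBond {V : Type*} {G : SimpleGraph V} (cd : CarvingDecomp G) : Prop :=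
  ∀ a b : cd.N, cd.T.Adj a b →
    (G.induce (cd.side a b)).Connected ∧ (G.induce (cd.side a b)ᶜ).Connected

/-- The `n × n` toroidal grid graph. -/
def torGrid (n : ℕ) : SimpleGraph (ZMod n × ZMod n) where
  Adj u v := u ≠ v ∧
    ((u.1 = v.1 ∧ (u.2 = v.2 + 1 ∨ v.2 = u.2 + 1)) ∨
     (u.2 = v.2 ∧ (u.1 = v.1 + 1 ∨ v.1 = u.1 + 1)))
  symm := by
    constructor
    rintro u v ⟨hne, h | h⟩
    · exact ⟨hne.symm, Or.inl ⟨h.1.symm, h.2.symm⟩⟩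
    · exact ⟨hne.symm, Or.inr ⟨h.1.symm, h.2.symm⟩⟩
  loopless := by constructor; rintro u ⟨hne, -⟩; exact hne rfl

/-!
Along an edge `s(a, b)` of a carving tree, each side of the induced bipartition contains a leaf of
the tree, hence a vertex of `G`; for a bond decomposition both sides are moreover connected, so the
middle set is one of the cuts assumed to have at least `k` edges.

For the torus no bond condition is needed. Among the oriented tree edges `(a, b)` whose side
`side a b` holds at least a third of the vertices, one with the smallest side also leaves at least
a third on the other side: otherwise `a` has degree three and `side a b` splits into the sides of
its two other neighbours, the larger of which is a smaller admissible side. A balanced set `U`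
either meets every row (or every column) on both sides, and each such cyclic line is cut twice, or
`U` or `Uᶜ` contains a full row and a full column, and then the other side lies in the rectangle
spanned by the rows and columns it meets, all of which are cut twice. Finally a heap-shaped binary
tree shows that carving decompositions exist, so the infimum defining `carvingWidth` is not taken
over the empty set, where it would be `0`.
-/

namespace SimpleGraph

variable {N : Type*} {T : SimpleGraph N} {a b x y z : N}

theorem Walk.reachable_deleteEdges_of_notMem_support {u v w : N} {e : Sym2 N} (p : T.Walk u v)
    (hw : w ∉ p.support) (he : w ∈ e) : (T.deleteEdges {e}).Reachable u v :=
  ⟨p.toDeleteEdge e fun hp => hw (p.mem_support_of_mem_edges hp he)⟩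

def branch (T : SimpleGraph N) (a b : N) : Set N :=
  {z | (T.deleteEdges {s(a, b)}).Reachable z a}

theorem self_mem_branch : a ∈ T.branch a b := Reachable.refl a

theorem IsAcyclic.notMem_branch (hT : T.IsAcyclic) (hab : T.Adj a b) : b ∉ T.branch a b :=
  fun h => isAcyclic_iff_forall_adj_isBridge.1 hT hab h.symm

theorem Preconnected.mem_branch_or (hT : T.Preconnected) (a b z : N) :
    z ∈ T.branch a b ∨ z ∈ T.branch b a := by
  classical
  rw [branch, branch, Set.mem_ofPred, Set.mem_ofPred, Sym2.eq_swap]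
  obtain ⟨p, hp⟩ := (hT z a).exists_isPath
  by_cases hab : s(b, a) ∈ p.edges
  · have hb := p.fst_mem_support_of_mem_edges hab
    exact .inr ((p.takeUntil b hb).reachable_deleteEdges_of_notMem_support
      (Walk.endpoint_notMem_support_takeUntil hp hb (p.adj_of_mem_edges hab).ne')
      (Sym2.mem_mk_right b a))
  · exact .inl ⟨p.toDeleteEdge _ hab⟩

theorem IsTree.compl_branch (hT : T.IsTree) (hab : T.Adj a b) :
    (T.branch a b)ᶜ = T.branch b a := by
  ext z
  refine ⟨(hT.connected.preconnected.mem_branch_or a b z).resolve_left, fun hz hza => ?_⟩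
  rw [branch, Set.mem_ofPred, Sym2.eq_swap] at hz
  exact hT.isAcyclic.notMem_branch hab (hz.symm.trans hza)

theorem IsAcyclic.branch_subset_branch (hT : T.IsAcyclic) (hbx : T.Adj b x) (hxy : x ≠ y) :
    T.branch x b ⊆ T.branch b y := by
  classical
  rintro z ⟨p⟩
  have hb : b ∉ p.support := fun hb => hT.notMem_branch hbx.symm ⟨p.dropUntil b hb⟩
  have hzx : (T.deleteEdges {s(b, y)}).Reachable z x :=
    (p.mapLe (deleteEdges_le _)).reachable_deleteEdges_of_notMem_support
      (by rwa [Walk.support_mapLe_eq_support]) (Sym2.mem_mk_left b y)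
  refine hzx.trans (Adj.reachable ?_)
  simp [hbx.symm, hbx.ne', hxy]

theorem mem_branch_cases (hz : z ∈ T.branch a b) :
    z = a ∨ ∃ c ∈ T.neighborSet a \ {b}, z ∈ T.branch c a := by
  classical
  obtain ⟨p⟩ := hz
  obtain ⟨q, hq⟩ := p.reverse.toPath
  cases q with
  | nil => exact .inl rfl
  | @cons _ c _ hac q =>
    rw [Walk.cons_isPath_iff] at hq
    rw [deleteEdges_adj, Set.mem_singleton_iff] at hac
    refine .inr ⟨c, ⟨hac.1, fun hcb => hac.2 (by rw [Set.mem_singleton_iff.1 hcb])⟩, ?_⟩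
    exact ((q.mapLe (deleteEdges_le _)).reachable_deleteEdges_of_notMem_support
      (by rw [Walk.support_mapLe_eq_support]; exact hq.2) (Sym2.mem_mk_right c a)).symm

theorem IsTree.exists_leaf_mem_branch [Finite N] (hT : T.IsTree) (hab : T.Adj a b) :
    ∃ ℓ ∈ T.branch a b, (T.neighborSet ℓ).ncard = 1 := by
  induction hk : (T.branch a b).ncard using Nat.strong_induction_on generalizing a b with
  | _ k ih =>
  by_cases hc : ∃ c ∈ T.neighborSet a, c ≠ b
  · obtain ⟨c, hac, hcb⟩ := hc
    have hsub : T.branch c a ⊆ T.branch a b := hT.isAcyclic.branch_subset_branch hac hcb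
    have hss : T.branch c a ⊂ T.branch a b := (Set.ssubset_iff_of_subset hsub).2
      ⟨a, self_mem_branch, hT.isAcyclic.notMem_branch hac.symm⟩
    have hlt : (T.branch c a).ncard < k := hk ▸ Set.ncard_lt_ncard hss
    obtain ⟨ℓ, hℓ, hdeg⟩ := ih _ hlt hac.symm rfl
    exact ⟨ℓ, hsub hℓ, hdeg⟩
  · push Not at hc
    have : T.neighborSet a = {b} :=
      Set.eq_singleton_iff_unique_mem.2 ⟨hab, hc⟩
    exact ⟨a, self_mem_branch, by rw [this, Set.ncard_singleton]⟩

theorem isTree_fromRel_of_parent {N : Type*} (f : N → N) (h : N → ℕ) (r : N) (hr : f r = r)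
    (hh : ∀ x ≠ r, h (f x) < h x) : (fromRel fun x y => f x = y).IsTree := by
  set T := fromRel fun x y => f x = y
  have hadj : ∀ x ≠ r, T.Adj x (f x) := fun x hx =>
    (fromRel_adj _ _ _).2 ⟨fun e => (hh x hx).ne (by rw [← e]), .inl rfl⟩
  have hle : ∀ k z, h (f^[k] z) ≤ h z := by
    intro k
    induction k with
    | zero => exact fun _ => le_rfl
    | succ k ih =>
      intro z
      rw [Function.iterate_succ_apply]
      refine (ih (f z)).trans ?_
      rcases eq_or_ne z r with rfl | hz
      · rw [hr]
      · exact (hh z hz).le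
  refine ⟨(connected_iff_exists_forall_reachable T).2 ⟨r, fun x => ?_⟩, ?_⟩
  · induction hk : h x using Nat.strong_induction_on generalizing x with
    | _ k ih =>
    rcases eq_or_ne x r with rfl | hx
    · rfl
    · exact (ih _ (hk ▸ hh x hx) (f x) rfl).trans (hadj x hx).reachable.symm
  -- removing `s(x, f x)` cuts the descendants of `x` off from the rest
  have hbridge : ∀ x ≠ r, T.IsBridge s(x, f x) := by
    intro x hx hreach
    let D := {u | ∃ k, f^[k] u = x}
    have hD : ∀ u v, (T.deleteEdges {s(x, f x)}).Adj u v → u ∈ D → v ∈ D := by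
      rintro u v huv ⟨k, hk⟩
      rw [deleteEdges_adj, fromRel_adj, Set.mem_singleton_iff] at huv
      obtain ⟨⟨-, rfl | rfl⟩, hne⟩ := huv
      · cases k with
        | zero => exact absurd (by rw [← hk]; rfl) hne
        | succ k => exact ⟨k, hk⟩
      · exact ⟨k + 1, hk⟩
    have hreachD : ∀ v, (T.deleteEdges {s(x, f x)}).Reachable x v → v ∈ D := by
      intro v hv
      rw [reachable_iff_reflTransGen] at hv
      induction hv with
      | refl => exact ⟨0, rfl⟩
      | tail _ huv ih => exact hD _ _ huv ih
    obtain ⟨k, hk⟩ := hreachD _ hreach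
    have := hle k (f x)
    rw [hk] at this
    exact (hh x hx).not_ge this
  rw [isAcyclic_iff_forall_adj_isBridge]
  rintro u v ⟨huv, rfl | rfl⟩
  · exact hbridge u fun hu => huv (by rw [hu, hr])
  · rw [Sym2.eq_swap]
    exact hbridge v fun hv => huv (by rw [hv, hr])

/-- The parent of node `i` is `i / 2`. When `M = 2 * k`, the nodes `1, …, k - 1` have the two
children `2 * i` and `2 * i + 1`, while `0` and `k, …, 2 * k - 1` are leaves. -/
def heapTree (M : ℕ) : SimpleGraph (Fin M) :=
  fromRel fun i j => (⟨i / 2, (Nat.div_le_self _ _).trans_lt i.isLt⟩ : Fin M) = j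

theorem heapTree_adj {M : ℕ} {i j : Fin M} :
    (heapTree M).Adj i j ↔ i ≠ j ∧ (j.val = i.val / 2 ∨ i.val = j.val / 2) := by
  simp [heapTree, Fin.ext_iff, eq_comm]

theorem isTree_heapTree {M : ℕ} (hM : 0 < M) : (heapTree M).IsTree :=
  isTree_fromRel_of_parent _ Fin.val ⟨0, hM⟩ (Fin.ext (Nat.zero_div 2)) fun _ hi =>
    Nat.div_lt_self (Nat.pos_of_ne_zero fun h => hi (Fin.ext h)) one_lt_two

variable {k : ℕ} {i : Fin (2 * k)}

theorem ncard_neighborSet_heapTree_eq_three (hi0 : i.val ≠ 0) (hik : i.val < k) :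
    ((heapTree (2 * k)).neighborSet i).ncard = 3 := by
  rw [Set.ncard_eq_three]
  refine ⟨⟨i / 2, by omega⟩, ⟨2 * i, by omega⟩, ⟨2 * i + 1, by omega⟩, ?_⟩
  simp only [ne_eq, Fin.mk.injEq]
  refine ⟨by omega, by omega, by omega, ?_⟩
  ext j
  simp only [mem_neighborSet, heapTree_adj, Set.mem_insert_iff, Set.mem_singleton_iff,
    Fin.ext_iff, ne_eq]
  omega

theorem ncard_neighborSet_heapTree_eq_one (hi : i.val = 0 ∨ k ≤ i.val) :
    ((heapTree (2 * k)).neighborSet i).ncard = 1 := by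
  rw [Set.ncard_eq_one]
  have := i.isLt
  rcases hi with hi | hi
  · refine ⟨⟨1, by omega⟩, ?_⟩
    ext j
    simp only [mem_neighborSet, heapTree_adj, Set.mem_singleton_iff, Fin.ext_iff, ne_eq]
    omega
  · refine ⟨⟨i / 2, by omega⟩, ?_⟩
    ext j
    simp only [mem_neighborSet, heapTree_adj, Set.mem_singleton_iff, Fin.ext_iff, ne_eq]
    omega

def heapLeaf {m : ℕ} (hm : 2 ≤ m) (j : Fin m) : Fin (2 * (m - 1)) :=
  ⟨if j.val = 0 then 0 else j + m - 2, by split_ifs <;> omega⟩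

theorem heapLeaf_injective {m : ℕ} (hm : 2 ≤ m) : Function.Injective (heapLeaf hm) := by
  intro i j h
  simp only [heapLeaf, Fin.mk.injEq] at h
  ext
  split_ifs at h <;> omega

theorem heapLeaf_isLeaf {m : ℕ} (hm : 2 ≤ m) (j : Fin m) :
    (heapLeaf hm j).val = 0 ∨ m - 1 ≤ (heapLeaf hm j).val := by
  simp only [heapLeaf]
  split_ifs <;> omega

theorem exists_heapLeaf_eq {m : ℕ} (hm : 2 ≤ m) {i : Fin (2 * (m - 1))}
    (hi : i.val = 0 ∨ m - 1 ≤ i.val) : ∃ j, heapLeaf hm j = i := by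
  have := i.isLt
  refine ⟨⟨if i.val = 0 then 0 else i + 2 - m, by split_ifs <;> omega⟩, Fin.ext ?_⟩
  simp only [heapLeaf]
  split_ifs <;> omega

end SimpleGraph

namespace CarvingDecomp

theorem finite {V : Type*} {G : SimpleGraph V} (cd : CarvingDecomp G) : Finite V :=
  have := cd.finN
  Finite.of_injective cd.φ cd.φinj

noncomputable def heap {V : Type*} [Finite V] (G : SimpleGraph V) (hV : 2 ≤ Nat.card V) :
    CarvingDecomp G where
  N := Fin (2 * (Nat.card V - 1))
  finN := inferInstance
  T := heapTree _
  isTree := isTree_heapTree (by omega)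
  binary i := by
    by_cases hi : i.val ≠ 0 ∧ i.val < Nat.card V - 1
    · exact .inr (ncard_neighborSet_heapTree_eq_three hi.1 hi.2)
    · exact .inl (ncard_neighborSet_heapTree_eq_one (by omega))
  φ v := heapLeaf hV (Finite.equivFin V v)
  φinj := (heapLeaf_injective hV).comp (Finite.equivFin V).injective
  φleaf v := ncard_neighborSet_heapTree_eq_one (heapLeaf_isLeaf hV _)
  leafφ i hi := by
    have hleaf : i.val = 0 ∨ Nat.card V - 1 ≤ i.val := by
      by_contra! h
      rw [ncard_neighborSet_heapTree_eq_three h.1 h.2] at hi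
      omega
    obtain ⟨j, rfl⟩ := exists_heapLeaf_eq hV hleaf
    exact ⟨(Finite.equivFin V).symm j, by simp⟩

variable {V : Type*} {G : SimpleGraph V} (cd : CarvingDecomp G) {a b c d : cd.N}

theorem exists_adj : ∃ a b, cd.T.Adj a b := by
  obtain ⟨a⟩ := cd.isTree.connected.nonempty
  obtain ⟨b, hb⟩ : (cd.T.neighborSet a).Nonempty := by
    have := cd.finN
    apply Set.nonempty_of_ncard_ne_zero
    rcases cd.binary a with h | h <;> omega
  exact ⟨a, b, hb⟩

theorem side_eq_preimage (a b : cd.N) : cd.side a b = cd.φ ⁻¹' cd.T.branch a b := rfl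

theorem compl_side (hab : cd.T.Adj a b) : (cd.side a b)ᶜ = cd.side b a := by
  rw [side_eq_preimage, ← Set.preimage_compl, cd.isTree.compl_branch hab, side_eq_preimage]

theorem ncard_side_add_ncard_side (hab : cd.T.Adj a b) :
    (cd.side a b).ncard + (cd.side b a).ncard = Nat.card V := by
  have := cd.finite
  rw [← cd.compl_side hab, Set.ncard_add_ncard_compl]

theorem side_nonempty (hab : cd.T.Adj a b) : (cd.side a b).Nonempty := by
  have := cd.finN
  obtain ⟨ℓ, hℓ, hdeg⟩ := cd.isTree.exists_leaf_mem_branch hab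
  obtain ⟨v, rfl⟩ := cd.leafφ ℓ hdeg
  exact ⟨v, hℓ⟩

theorem side_subset_side (hab : cd.T.Adj a b) (hbc : b ≠ c) :
    cd.side b a ⊆ cd.side a c :=
  Set.preimage_mono (cd.isTree.isAcyclic.branch_subset_branch hab hbc)

theorem side_subset_union (hnb : cd.T.neighborSet a \ {b} = {c, d})
    (hφ : ∀ v, cd.φ v ≠ a) : cd.side a b ⊆ cd.side c a ∪ cd.side d a := by
  intro v hv
  rcases SimpleGraph.mem_branch_cases hv with h | ⟨x, hx, hvx⟩
  · exact absurd h (hφ v)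
  · rw [hnb] at hx
    rcases hx with rfl | rfl
    · exact .inl hvx
    · exact .inr hvx

theorem ncard_side_le_one (hab : cd.T.Adj a b) (ha : (cd.T.neighborSet a).ncard = 1) :
    (cd.side a b).ncard ≤ 1 := by
  have := cd.finite
  have hnb : cd.T.neighborSet a \ {b} = ∅ := by
    have := cd.finN
    rw [← Set.ncard_eq_zero, Set.ncard_sdiff_singleton_of_mem (s := cd.T.neighborSet a) hab, ha]
  have hφ : ∀ v ∈ cd.side a b, cd.φ v = a := fun v hv => by
    simpa [hnb] using SimpleGraph.mem_branch_cases hv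
  exact (Set.ncard_le_one (Set.toFinite _)).2 fun u hu v hv =>
    cd.φinj ((hφ u hu).trans (hφ v hv).symm)

theorem exists_ncard_side_eq_add (hab : cd.T.Adj a b) (ha : (cd.T.neighborSet a).ncard = 3) :
    ∃ c d, cd.T.Adj c a ∧ cd.T.Adj d a ∧
      (cd.side a b).ncard = (cd.side c a).ncard + (cd.side d a).ncard := by
  have := cd.finN
  have := cd.finite
  obtain ⟨c, d, hcd, hnb⟩ : ∃ c d, c ≠ d ∧ cd.T.neighborSet a \ {b} = {c, d} := by
    rw [← Set.ncard_eq_two, Set.ncard_sdiff_singleton_of_mem (s := cd.T.neighborSet a) hab, ha]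
  have hc : c ∈ cd.T.neighborSet a \ {b} := hnb ▸ Set.mem_insert c {d}
  have hd : d ∈ cd.T.neighborSet a \ {b} := hnb ▸ Set.mem_insert_of_mem c rfl
  have hφ : ∀ v, cd.φ v ≠ a := fun v hv => by
    have := cd.φleaf v
    rw [hv] at this
    omega
  have hdisj : Disjoint (cd.side c a) (cd.side d a) := by
    rw [← Set.subset_compl_iff_disjoint_right, cd.compl_side hd.1.symm]
    exact cd.side_subset_side hc.1 hcd
  have hunion : cd.side a b = cd.side c a ∪ cd.side d a :=
    (cd.side_subset_union hnb hφ).antisymm <| Set.union_subset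
      (cd.side_subset_side hc.1 hc.2) (cd.side_subset_side hd.1 hd.2)
  exact ⟨c, d, hc.1.symm, hd.1.symm, by rw [hunion, Set.ncard_union_eq hdisj]⟩

theorem exists_balanced_edge (hV : 2 ≤ Nat.card V) :
    ∃ a b, cd.T.Adj a b ∧ Nat.card V ≤ 3 * (cd.side a b).ncard ∧
      Nat.card V ≤ 3 * (cd.side a b)ᶜ.ncard := by
  have := cd.finN
  have := cd.finite
  let P := {p : cd.N × cd.N | cd.T.Adj p.1 p.2 ∧ Nat.card V ≤ 3 * (cd.side p.1 p.2).ncard}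
  have hP : P.Nonempty := by
    obtain ⟨a, b, hab⟩ := cd.exists_adj
    have := cd.ncard_side_add_ncard_side hab
    by_cases h : Nat.card V ≤ 3 * (cd.side a b).ncard
    · exact ⟨(a, b), hab, h⟩
    · exact ⟨(b, a), hab.symm, show _ ≤ 3 * (cd.side b a).ncard by omega⟩
  obtain ⟨⟨a, b⟩, ⟨hab, hbal⟩, hmin⟩ :=
    Set.exists_min_image P (fun p => (cd.side p.1 p.2).ncard) (Set.toFinite P) hP
  dsimp only at hab hbal hmin
  refine ⟨a, b, hab, hbal, ?_⟩
  rw [cd.compl_side hab]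
  by_contra! hsmall
  have hsum := cd.ncard_side_add_ncard_side hab
  rcases cd.binary a with ha | ha
  · have := cd.ncard_side_le_one hab ha
    omega
  obtain ⟨c, d, hca, hda, hsplit⟩ := cd.exists_ncard_side_eq_add hab ha
  have hc := Set.ncard_pos (Set.toFinite _) |>.2 (cd.side_nonempty hca)
  have hd := Set.ncard_pos (Set.toFinite _) |>.2 (cd.side_nonempty hda)
  rcases le_total (cd.side c a).ncard (cd.side d a).ncard with h | h
  · have : _ ≤ (cd.side d a).ncard :=
      hmin (d, a) ⟨hda, show _ ≤ 3 * (cd.side d a).ncard by omega⟩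
    omega
  · have : _ ≤ (cd.side c a).ncard :=
      hmin (c, a) ⟨hca, show _ ≤ 3 * (cd.side c a).ncard by omega⟩
    omega

theorem IsBond.le_of_widthLE {cd : CarvingDecomp G} {k m : ℕ} (hbond : cd.IsBond)
    (hcut : ∀ U : Set V, U.Nonempty → Uᶜ.Nonempty →
      (G.induce U).Connected → (G.induce Uᶜ).Connected → k ≤ (crossCut G U).ncard)
    (hw : cd.widthLE m) : k ≤ m := by
  obtain ⟨a, b, hab⟩ := cd.exists_adj
  have hcompl : (cd.side a b)ᶜ.Nonempty := cd.compl_side hab ▸ cd.side_nonempty hab.symm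
  exact (hcut _ (cd.side_nonempty hab) hcompl (hbond a b hab).1 (hbond a b hab).2).trans
    (hw a b hab)

theorem widthLE_ncard_edgeSet : cd.widthLE G.edgeSet.ncard := by
  have := cd.finite
  exact fun a b _ => Set.ncard_le_ncard (fun e he => he.1) (Set.toFinite _)

end CarvingDecomp

theorem le_carvingWidth_of_balanced {V : Type*} [Finite V] {G : SimpleGraph V} {k : ℕ}
    (hV : 2 ≤ Nat.card V)
    (h : ∀ U : Set V, Nat.card V ≤ 3 * U.ncard → Nat.card V ≤ 3 * Uᶜ.ncard →
      k ≤ (crossCut G U).ncard) :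
    k ≤ carvingWidth G :=
  le_csInf ⟨_, _, (CarvingDecomp.heap G hV).widthLE_ncard_edgeSet⟩ fun _ ⟨cd, hw⟩ => by
    obtain ⟨a, b, hab, h1, h2⟩ := cd.exists_balanced_edge hV
    exact (h _ h1 h2).trans (hw a b hab)

theorem ZMod.exists_mem_add_one_notMem {n : ℕ} [NeZero n] {S : Set (ZMod n)} {a b : ZMod n}
    (ha : a ∈ S) (hb : b ∉ S) : ∃ x ∈ S, x + 1 ∉ S := by
  by_contra! h
  have hS : ∀ k : ℕ, a + k ∈ S := by
    intro k
    induction k with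
    | zero => simpa using ha
    | succ k ih => simpa [add_assoc] using h _ ih
  exact hb (by simpa using hS (b - a).val)

theorem crossCut_compl {V : Type*} (G : SimpleGraph V) (U : Set V) :
    crossCut G Uᶜ = crossCut G U := by
  ext e
  constructor <;>
  · rintro ⟨he, u, w, hu, hw, rfl⟩
    exact ⟨he, w, u, by simpa using hw, by simpa using hu, Sym2.eq_swap⟩

/-- The `L i` are cycles of length `n` with pairwise distinct edges; each one that meets both `U`
and `Uᶜ` crosses the cut twice. -/
theorem two_mul_ncard_le_ncard_crossCut {V ι : Type*} [Finite V] {n : ℕ} [NeZero n]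
    (G : SimpleGraph V) (U : Set V) (L : ι → ZMod n → V)
    (hadj : ∀ i x, G.Adj (L i x) (L i (x + 1)))
    (hinj : Function.Injective fun p : ι × ZMod n => s(L p.1 p.2, L p.1 (p.2 + 1)))
    {R : Set ι} (hR : ∀ i ∈ R, (∃ x, L i x ∈ U) ∧ ∃ x, L i x ∉ U) :
    2 * R.ncard ≤ (crossCut G U).ncard := by
  have hexit : ∀ i ∈ R, ∃ x, L i x ∈ U ∧ L i (x + 1) ∉ U := fun i hi => by
    obtain ⟨⟨a, ha⟩, b, hb⟩ := hR i hi
    exact ZMod.exists_mem_add_one_notMem (S := {x | L i x ∈ U}) ha hb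
  have henter : ∀ i ∈ R, ∃ x, L i x ∉ U ∧ L i (x + 1) ∈ U := fun i hi => by
    obtain ⟨⟨a, ha⟩, b, hb⟩ := hR i hi
    simpa using ZMod.exists_mem_add_one_notMem (S := {x | L i x ∉ U}) hb (not_not.2 ha)
  choose! x hx using hexit
  choose! y hy using henter
  let F : ι × Bool → ι × ZMod n := fun p => (p.1, if p.2 then x p.1 else y p.1)
  have hF : Set.InjOn F (R ×ˢ Set.univ) := by
    rintro ⟨i, _ | _⟩ ⟨hi, -⟩ ⟨j, _ | _⟩ ⟨hj, -⟩ h <;>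
      simp only [F, Prod.mk.injEq, Bool.false_eq_true, if_true, if_false] at h <;>
      obtain ⟨rfl, h⟩ := h
    · rfl
    · exact absurd (h ▸ (hy i hi).1) (not_not.2 (hx i hi).1)
    · exact absurd (h ▸ (hx i hi).1) (hy i hi).1
    · rfl
  have hsub : (fun p : ι × ZMod n => s(L p.1 p.2, L p.1 (p.2 + 1))) ∘ F '' (R ×ˢ Set.univ) ⊆
      crossCut G U := by
    rintro _ ⟨⟨i, _ | _⟩, ⟨hi, -⟩, rfl⟩
    · exact ⟨hadj _ _, _, _, (hy i hi).2, (hy i hi).1, Sym2.eq_swap⟩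
    · exact ⟨hadj _ _, _, _, (hx i hi).1, (hx i hi).2, rfl⟩
  calc 2 * R.ncard = (R ×ˢ (Set.univ : Set Bool)).ncard := by
        rw [Set.ncard_prod, Set.ncard_univ, Nat.card_eq_fintype_card, Fintype.card_bool, mul_comm]
    _ = _ := ((hinj.comp_injOn hF).ncard_image).symm
    _ ≤ _ := Set.ncard_le_ncard hsub (Set.toFinite _)

section Torus

variable {n : ℕ}

theorem ZMod.two_ne_zero_of_three_le (hn : 3 ≤ n) : (2 : ZMod n) ≠ 0 := fun h => by
  have := Nat.le_of_dvd two_pos ((ZMod.natCast_eq_zero_iff 2 n).1 (by exact_mod_cast h))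
  omega

theorem ZMod.add_one_ne_self (hn : n ≠ 1) (x : ZMod n) : x + 1 ≠ x := fun h =>
  hn (ZMod.one_eq_zero_iff.1 (by linear_combination h))

theorem two_mul_ncard_le_ncard_crossCut_torGrid_rows (hn : 3 ≤ n) (U : Set (ZMod n × ZMod n))
    {R : Set (ZMod n)} (hR : ∀ i ∈ R, (∃ j, (i, j) ∈ U) ∧ ∃ j, (i, j) ∉ U) :
    2 * R.ncard ≤ (crossCut (torGrid n) U).ncard := by
  have : NeZero n := ⟨by omega⟩
  refine two_mul_ncard_le_ncard_crossCut (torGrid n) U Prod.mk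
    (fun _ x => ⟨by simpa using (ZMod.add_one_ne_self (by omega) x).symm, .inl ⟨rfl, .inr rfl⟩⟩)
    ?_ hR
  rintro ⟨i, x⟩ ⟨j, y⟩ h
  simp only [Sym2.eq_iff, Prod.mk.injEq] at h
  rcases h with ⟨⟨rfl, rfl⟩, -⟩ | ⟨⟨rfl, h₁⟩, -, h₂⟩
  · rfl
  · exact absurd (by linear_combination h₂ - h₁) (ZMod.two_ne_zero_of_three_le hn)

theorem two_mul_ncard_le_ncard_crossCut_torGrid_cols (hn : 3 ≤ n) (U : Set (ZMod n × ZMod n))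
    {C : Set (ZMod n)} (hC : ∀ j ∈ C, (∃ i, (i, j) ∈ U) ∧ ∃ i, (i, j) ∉ U) :
    2 * C.ncard ≤ (crossCut (torGrid n) U).ncard := by
  have : NeZero n := ⟨by omega⟩
  refine two_mul_ncard_le_ncard_crossCut (torGrid n) U (fun j x => (x, j))
    (fun _ x => ⟨by simpa using (ZMod.add_one_ne_self (by omega) x).symm, .inr ⟨rfl, .inr rfl⟩⟩)
    ?_ hC
  rintro ⟨i, x⟩ ⟨j, y⟩ h
  simp only [Sym2.eq_iff, Prod.mk.injEq] at h
  rcases h with ⟨⟨rfl, rfl⟩, -⟩ | ⟨⟨h₁, rfl⟩, h₂, -⟩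
  · rfl
  · exact absurd (by linear_combination h₂ - h₁) (ZMod.two_ne_zero_of_three_le hn)

theorem le_ncard_crossCut_torGrid_of_row_col (hn : 3 ≤ n) {U : Set (ZMod n × ZMod n)}
    {i₀ j₀ : ZMod n} (hrow : ∀ j, (i₀, j) ∈ U) (hcol : ∀ i, (i, j₀) ∈ U)
    (hbal : n * n ≤ 3 * Uᶜ.ncard) : n ≤ (crossCut (torGrid n) U).ncard := by
  have : NeZero n := ⟨by omega⟩
  let R := {i | ∃ j, (i, j) ∉ U}
  let C := {j | ∃ i, (i, j) ∉ U}
  have hR := two_mul_ncard_le_ncard_crossCut_torGrid_rows hn U (R := R)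
    fun i hi => ⟨⟨j₀, hcol i⟩, hi⟩
  have hC := two_mul_ncard_le_ncard_crossCut_torGrid_cols hn U (C := C)
    fun j hj => ⟨⟨i₀, hrow j⟩, hj⟩
  have hRC : Uᶜ.ncard ≤ R.ncard * C.ncard := by
    rw [← Set.ncard_prod]
    exact Set.ncard_le_ncard (fun p hp => ⟨⟨p.2, hp⟩, p.1, hp⟩) (Set.toFinite _)
  by_contra! hcut
  nlinarith

theorem le_ncard_crossCut_torGrid (hn : 3 ≤ n) {U : Set (ZMod n × ZMod n)}
    (hU : n * n ≤ 3 * U.ncard) (hUc : n * n ≤ 3 * Uᶜ.ncard) :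
    n ≤ (crossCut (torGrid n) U).ncard := by
  have : NeZero n := ⟨by omega⟩
  by_cases hrows : ∀ i, (∃ j, (i, j) ∈ U) ∧ ∃ j, (i, j) ∉ U
  · have := two_mul_ncard_le_ncard_crossCut_torGrid_rows hn U (R := Set.univ) fun i _ => hrows i
    rw [Set.ncard_univ, Nat.card_zmod] at this
    omega
  by_cases hcols : ∀ j, (∃ i, (i, j) ∈ U) ∧ ∃ i, (i, j) ∉ U
  · have := two_mul_ncard_le_ncard_crossCut_torGrid_cols hn U (C := Set.univ) fun j _ => hcols j
    rw [Set.ncard_univ, Nat.card_zmod] at this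
    omega
  -- a row and a column not meeting both sides lie on the side of their common vertex `(i₀, j₀)`
  obtain ⟨i₀, hi₀⟩ := not_forall.1 hrows
  obtain ⟨j₀, hj₀⟩ := not_forall.1 hcols
  by_cases h : (i₀, j₀) ∈ U
  · exact le_ncard_crossCut_torGrid_of_row_col hn
      (fun j => by_contra fun hj => hi₀ ⟨⟨j₀, h⟩, j, hj⟩)
      (fun i => by_contra fun hi => hj₀ ⟨⟨i₀, h⟩, i, hi⟩) hUc
  · rw [← crossCut_compl]
    exact le_ncard_crossCut_torGrid_of_row_col hn (U := Uᶜ)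
      (fun j hj => hi₀ ⟨⟨j, hj⟩, j₀, h⟩) (fun i hi => hj₀ ⟨⟨i, hi⟩, i₀, h⟩)
      (by rwa [compl_compl])

end Torus

/-- if every bipartition of a connected graph `G` into two
nonempty sets, each inducing a connected subgraph, is crossed by at least `k`
edges, then every bond carving-decomposition has width at least `k`.
Consequently the `n × n` toroidal grid has carving-width at least `n`. -/
theorem stmt18 :
    (∀ (V : Type) [Fintype V] (G : SimpleGraph V), G.Connected →
      ∀ k : ℕ,
        (∀ U : Set V, U.Nonempty → Uᶜ.Nonempty →
          (G.induce U).Connected → (G.induce Uᶜ).Connected →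
          k ≤ (crossCut G U).ncard) →
        ∀ cd : CarvingDecomp G, cd.IsBond → ∀ m : ℕ, cd.widthLE m → k ≤ m) ∧
      (∀ n : ℕ, 3 ≤ n → n ≤ carvingWidth (torGrid n)) := by
  refine ⟨fun V _ G _ k hcut cd hbond m hw => hbond.le_of_widthLE hcut hw, fun n hn => ?_⟩
  have : NeZero n := ⟨by omega⟩
  have hcard : Nat.card (ZMod n × ZMod n) = n * n := by rw [Nat.card_prod, Nat.card_zmod]
  refine le_carvingWidth_of_balanced (by nlinarith) fun U hU hUc => ?_
  rw [hcard] at hU hUc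
  exact le_ncard_crossCut_torGrid hn hU hUc
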